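/- Let V be an ℵ₀-dimensional real vector space endowed with the trivial (indiscrete) topology, and let X := ℝ^∞ × V with the product topology. Then X is a topological vector space with dim(X) = ℵ₀ < w(X) (in particular X is not first-countable), and there exists a countably infinite family {X_n}_{n∈ℕ} of dense linear subspaces of X such that X_i ∩ X_j = {0} whenever i ≠ j. Concretely, if {e_m : m ∈ ℕ} is the canonical basis of ℝ^∞ and {f_m^n : m, n ∈ ℕ} is a basis of V, one may take X_n := span({(e_m, f_m^n) : m ∈ ℕ}). -/

import Mathlib

open Cardinal

/-- The submodule of `ℕ → ℝ` consisting of finitely supported sequences. -/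
def RinfSubmodule : Submodule ℝ (ℕ → ℝ) where
  carrier := { f | ∃ N : ℕ, ∀ n, N ≤ n → f n = 0 }
  add_mem' := by
    rintro f g ⟨N, hN⟩ ⟨M, hM⟩
    exact ⟨max N M, fun n hn => by
      simp [hN n (le_trans (le_max_left _ _) hn), hM n (le_trans (le_max_right _ _) hn)]⟩
  zero_mem' := ⟨0, fun n _ => rfl⟩
  smul_mem' := by
    rintro c f ⟨N, hN⟩
    exact ⟨N, fun n hn => by simp [hN n hn]⟩

/-- `ℝ^∞`, the space of finitely supported real sequences, as a type synonym (so that it does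
not inherit the subspace topology; it will be equipped with the inductive limit topology). -/
def Rinf : Type := RinfSubmodule

instance : AddCommGroup Rinf := inferInstanceAs (AddCommGroup RinfSubmodule)
noncomputable instance : Module ℝ Rinf := inferInstanceAs (Module ℝ RinfSubmodule)

/-- The inclusion `u_n : ℝⁿ → ℝ^∞`. -/
def uMap (n : ℕ) (x : Fin n → ℝ) : Rinf :=
  (⟨fun i => if h : i < n then x ⟨i, h⟩ else 0,
    ⟨n, fun _ hm => dif_neg (Nat.not_lt.mpr hm)⟩⟩ : RinfSubmodule)

/-- The inductive limit (final) topology on `ℝ^∞` with respect to the inclusions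
`u_n : ℝⁿ → ℝ^∞`, where each `ℝⁿ` carries the Euclidean (product) topology. -/
instance RinfTopology : TopologicalSpace Rinf :=
  ⨆ n : ℕ, TopologicalSpace.coinduced (uMap n) inferInstance

/-- The canonical basis vector `e_m` of `ℝ^∞` (`1` in coordinate `m`, `0` elsewhere). -/
noncomputable def eRinf (m : ℕ) : Rinf :=
  (⟨fun i => if i = m then 1 else 0, ⟨m + 1, fun k hk => if_neg (by omega)⟩⟩ : RinfSubmodule)

/-- The weight of a topological space: the smallest cardinality of a basis for its topology. -/
noncomputable def tsWeight (X : Type*) [TopologicalSpace X] : Cardinal :=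
  sInf { c : Cardinal | ∃ B : Set (Set X),
    TopologicalSpace.IsTopologicalBasis B ∧ #↥B = c }

/-!
The inductive limit topology of `ℝ^∞` is the locally convex topology of the weighted `ℓ¹`
seminorms `∑ w m * |x m|`: every neighbourhood of `0` contains a weighted unit ball, whose weights
are chosen one coordinate at a time, using compactness of the finite-dimensional balls (tube
lemma). Hence `ℝ^∞` is a topological vector space, and a diagonal argument against a countable
neighbourhood basis of `0` shows that it is not first countable; neither is `ℝ^∞ × V`, so its
weight is uncountable.

The subspace `X_n` is the graph of the linear map `Φ_n : e_m ↦ f (m, n)`. It projects onto `ℝ^∞`,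
so it is dense because `V` is indiscrete; two such graphs meet only in `0` because `Φ_i` is
injective and the ranges of `Φ_i` and `Φ_j` are spanned by disjoint parts of the basis `f`.
-/

open Filter Topology
open scoped NNReal

namespace Rinf

-- `Rinf` is a type synonym, so coordinates are read through this map rather than `Subtype.val`.
noncomputable def toSeq : Rinf →ₗ[ℝ] ℕ → ℝ := RinfSubmodule.subtype

lemma toSeq_injective : Function.Injective toSeq := Subtype.val_injective

@[ext] lemma ext {x y : Rinf} (h : ∀ m, toSeq x m = toSeq y m) : x = y :=
  toSeq_injective (funext h)

lemma exists_toSeq_eq_zero (x : Rinf) : ∃ N, ∀ m, N ≤ m → toSeq x m = 0 := x.2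

lemma toSeq_uMap (n : ℕ) (y : Fin n → ℝ) (m : ℕ) :
    toSeq (uMap n y) m = if h : m < n then y ⟨m, h⟩ else 0 := rfl

lemma toSeq_eRinf (k : ℕ) : toSeq (eRinf k) = Pi.single k 1 := by
  ext m
  rw [Pi.single_apply]
  rfl

lemma uMap_restrict {n : ℕ} {x : Rinf} (hx : ∀ m, n ≤ m → toSeq x m = 0) :
    uMap n (fun i => toSeq x i) = x := by
  ext m
  rw [toSeq_uMap]
  split_ifs with h
  · rfl
  · exact (hx m (not_lt.1 h)).symm

lemma exists_uMap_eq (x : Rinf) : ∃ n y, uMap n y = x :=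
  let ⟨n, hn⟩ := x.exists_toSeq_eq_zero
  ⟨n, _, uMap_restrict hn⟩

lemma uMap_zero (y : Fin 0 → ℝ) : uMap 0 y = 0 := by
  ext m
  rw [toSeq_uMap, dif_neg (Nat.not_lt_zero m), map_zero]
  rfl

lemma uMap_snoc_zero {n : ℕ} (y : Fin n → ℝ) :
    uMap (n + 1) (Fin.snoc (α := fun _ => ℝ) y 0) = uMap n y := by
  ext m
  simp only [toSeq_uMap]
  rcases lt_trichotomy m n with h | rfl | h
  · rw [dif_pos (by omega), dif_pos h]
    exact Fin.snoc_castSucc (α := fun _ => ℝ) (i := ⟨m, h⟩) ..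
  · rw [dif_pos (by omega), dif_neg (lt_irrefl m)]
    exact Fin.snoc_last (α := fun _ => ℝ) ..
  · rw [dif_neg (by omega), dif_neg (by omega)]

lemma continuous_uMap (n : ℕ) : Continuous (uMap n) :=
  continuous_iSup_rng continuous_coinduced_rng

lemma continuous_toSeq_uMap (n m : ℕ) : Continuous fun y : Fin n → ℝ => toSeq (uMap n y) m := by
  simp only [toSeq_uMap]
  split_ifs
  exacts [continuous_apply _, continuous_const]

lemma continuous_of_comp_uMap {Y : Type*} [TopologicalSpace Y] {g : Rinf → Y}
    (h : ∀ n, Continuous (g ∘ uMap n)) : Continuous g :=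
  continuous_iSup_dom.2 fun n => continuous_coinduced_dom.2 (h n)

lemma continuous_of_continuous_toSeq {Y : Type*} [TopologicalSpace Y] {g : Y → Rinf} (n : ℕ)
    (hsupp : ∀ y m, n ≤ m → toSeq (g y) m = 0) (hg : ∀ m, Continuous fun y => toSeq (g y) m) :
    Continuous g := by
  have : g = uMap n ∘ fun y i => toSeq (g y) i := funext fun y => (uMap_restrict (hsupp y)).symm
  rw [this]
  exact (continuous_uMap n).comp (continuous_pi fun i => hg i)

lemma continuous_const_add (v : Rinf) : Continuous (v + ·) := by
  refine continuous_of_comp_uMap fun n => ?_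
  obtain ⟨N, hN⟩ := v.exists_toSeq_eq_zero
  refine continuous_of_continuous_toSeq (max n N) (fun y m hm => ?_) fun m => ?_
  · simp only [Function.comp_apply, map_add, Pi.add_apply]
    rw [hN m (le_of_max_le_right hm), toSeq_uMap, dif_neg (by omega), add_zero]
  · simp only [Function.comp_apply, map_add, Pi.add_apply]
    exact continuous_const.add (continuous_toSeq_uMap n m)

lemma map_const_add_nhds_zero (v : Rinf) : map (v + ·) (𝓝 0) = 𝓝 v := by
  let τ : Rinf ≃ₜ Rinf :=
    { Equiv.addLeft v with
      continuous_toFun := continuous_const_add v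
      continuous_invFun := continuous_const_add (-v) }
  exact (τ.map_nhds_eq 0).trans (congrArg 𝓝 (add_zero v))

lemma summable_mul_abs (w : ℕ → ℝ≥0) (x : Rinf) :
    Summable fun m => (w m : ℝ) * |toSeq x m| := by
  obtain ⟨N, hN⟩ := x.exists_toSeq_eq_zero
  refine summable_of_ne_finset_zero (s := Finset.range N) fun m hm => ?_
  simp [hN m (by simpa using hm)]

noncomputable def weightedSeminorm (w : ℕ → ℝ≥0) : Seminorm ℝ Rinf :=
  Seminorm.of (fun x => ∑' m, (w m : ℝ) * |toSeq x m|)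
    (fun x y => by
      rw [← (summable_mul_abs w x).tsum_add (summable_mul_abs w y)]
      refine (summable_mul_abs w _).tsum_le_tsum (fun m => ?_)
        ((summable_mul_abs w x).add (summable_mul_abs w y))
      rw [map_add, Pi.add_apply, ← mul_add]
      exact mul_le_mul_of_nonneg_left (abs_add_le _ _) (w m).2)
    (fun a x => by
      simp only [map_smul, Pi.smul_apply, smul_eq_mul, abs_mul, Real.norm_eq_abs, mul_left_comm]
      exact tsum_mul_left)

lemma weightedSeminorm_uMap (w : ℕ → ℝ≥0) (n : ℕ) (y : Fin n → ℝ) :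
    weightedSeminorm w (uMap n y) = ∑ i : Fin n, (w i : ℝ) * |y i| := by
  change ∑' m, _ = _
  rw [tsum_eq_sum (s := Finset.range n) fun m hm => by
      rw [toSeq_uMap, dif_neg (by simpa using hm), abs_zero, mul_zero],
    ← Fin.sum_univ_eq_sum_range]
  simp [toSeq_uMap]

lemma weightedSeminorm_eRinf (w : ℕ → ℝ≥0) (k : ℕ) : weightedSeminorm w (eRinf k) = w k := by
  change ∑' m, (w m : ℝ) * |toSeq (eRinf k) m| = w k
  rw [tsum_eq_single k fun m hm => by simp [toSeq_eRinf, hm]]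
  simp [toSeq_eRinf]

lemma continuous_weightedSeminorm (w : ℕ → ℝ≥0) : Continuous (weightedSeminorm w) :=
  continuous_of_comp_uMap fun n => by
    simp only [Function.comp_def, weightedSeminorm_uMap]
    fun_prop

lemma weightedSeminorm_uMap_snoc (w : ℕ → ℝ≥0) (r : ℝ≥0) {n : ℕ} (y : Fin n → ℝ) (t : ℝ) :
    weightedSeminorm (Function.update w n r) (uMap (n + 1) (Fin.snoc (α := fun _ => ℝ) y t)) =
      weightedSeminorm w (uMap n y) + r * |t| := by
  simp only [weightedSeminorm_uMap, Fin.sum_univ_castSucc, Fin.val_castSucc, Fin.val_last,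
    Fin.snoc_castSucc, Fin.snoc_last, Function.update_self]
  congr 1
  exact Finset.sum_congr rfl fun i _ => by rw [Function.update_of_ne i.isLt.ne]

lemma isCompact_weightedSeminorm_uMap_le {w : ℕ → ℝ≥0} (hw : ∀ i, 0 < w i) (n : ℕ) :
    IsCompact {y : Fin n → ℝ | weightedSeminorm w (uMap n y) ≤ 1} := by
  refine (isCompact_univ_pi fun i : Fin n => isCompact_Icc (a := -(w i : ℝ)⁻¹) (b := (w i)⁻¹))
    |>.of_isClosed_subset (isClosed_le ((continuous_weightedSeminorm w).comp (continuous_uMap n))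
      continuous_const) fun y hy => Set.mem_univ_pi.2 fun i => ?_
  have hi : (w i : ℝ) * |y i| ≤ 1 := by
    refine le_trans ?_ ((weightedSeminorm_uMap w n y).symm.trans_le hy)
    exact Finset.single_le_sum (f := fun j : Fin n => (w j : ℝ) * |y j|)
      (fun j _ => by positivity) (Finset.mem_univ i)
  rw [Set.mem_Icc, ← abs_le, ← one_div, le_div_iff₀' (NNReal.coe_pos.2 (hw i))]
  exact hi

def StageBallSubset (U : Set Rinf) (n : ℕ) (w : ℕ → ℝ≥0) : Prop :=
  (∀ i, 0 < w i) ∧ ∀ y : Fin n → ℝ, weightedSeminorm w (uMap n y) ≤ 1 → uMap n y ∈ U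

lemma StageBallSubset.exists_succ {U : Set Rinf} (hU : IsOpen U) {n : ℕ} {w : ℕ → ℝ≥0}
    (h : StageBallSubset U n w) : ∃ r, StageBallSubset U (n + 1) (Function.update w n r) := by
  obtain ⟨hw, hU_n⟩ := h
  -- tube lemma: the compact stage-`n` ball times a small interval in the new coordinate lies in `U`
  have hev : ∀ᶠ t in 𝓝 (0 : ℝ), ∀ y ∈ {y | weightedSeminorm w (uMap n y) ≤ 1},
      uMap (n + 1) (Fin.snoc (α := fun _ => ℝ) y t) ∈ U := by
    refine (isCompact_weightedSeminorm_uMap_le hw n).eventually_forall_of_forall_eventually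
      fun y hy => ?_
    have hc : Continuous fun z : ℝ × (Fin n → ℝ) => uMap (n + 1) (Fin.snoc z.2 z.1) :=
      (continuous_uMap _).comp (by fun_prop)
    refine hc.continuousAt.preimage_mem_nhds (hU.mem_nhds ?_)
    simpa only [uMap_snoc_zero] using hU_n y hy
  obtain ⟨δ, hδ, hδU⟩ := Metric.eventually_nhds_iff.1 hev
  let r : ℝ≥0 := ⟨2 / δ, by positivity⟩
  have hr : (0 : ℝ) < r := show 0 < 2 / δ by positivity
  refine ⟨r, fun i => ?_, fun z hz => ?_⟩
  · rcases eq_or_ne i n with rfl | hi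
    · rw [Function.update_self]
      exact NNReal.coe_pos.1 hr
    · rw [Function.update_of_ne hi]
      exact hw i
  rw [← Fin.snoc_init_self z] at hz ⊢
  rw [weightedSeminorm_uMap_snoc] at hz
  have hy := apply_nonneg (weightedSeminorm w) (uMap n (Fin.init z))
  have ht : 0 ≤ (r : ℝ) * |z (Fin.last n)| := by positivity
  refine hδU ?_ _ (show weightedSeminorm w (uMap n (Fin.init z)) ≤ 1 by linarith)
  change _ + 2 / δ * _ ≤ 1 at hz
  rw [Real.dist_eq, sub_zero]
  have : 2 / δ * |z (Fin.last n)| ≤ 1 := by linarith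
  rw [div_mul_eq_mul_div, div_le_one hδ] at this
  linarith

theorem exists_weightedSeminorm_ball_subset {U : Set Rinf} (hU : U ∈ 𝓝 0) :
    ∃ w, (weightedSeminorm w).ball 0 1 ⊆ U := by
  obtain ⟨V, hVU, hV, h0⟩ := mem_nhds_iff.1 hU
  choose r hr using fun n (w : {w // StageBallSubset V n w}) => w.2.exists_succ hV
  -- passing from `g n` to `g (n + 1)` changes only the weight of coordinate `n`
  let g : (n : ℕ) → {w // StageBallSubset V n w} := fun n =>
    Nat.rec ⟨1, fun _ => one_pos, fun y _ => (uMap_zero y).symm ▸ h0⟩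
      (fun n w => ⟨_, hr n w⟩) n
  have hg : ∀ n, ∀ i < n, (g n).1 i = (g (i + 1)).1 i := by
    intro n
    induction n with
    | zero => intro i hi; omega
    | succ n ih =>
      intro i hi
      rcases (Nat.lt_succ_iff.1 hi).eq_or_lt with rfl | hi
      · rfl
      · exact (Function.update_of_ne hi.ne _ _).trans (ih i hi)
  refine ⟨fun i => (g (i + 1)).1 i, fun x hx => hVU ?_⟩
  obtain ⟨N, y, rfl⟩ := exists_uMap_eq x
  refine (g N).2.2 y (le_of_eq_of_le ?_ ((Seminorm.mem_ball_zero _).1 hx).le)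
  simp only [weightedSeminorm_uMap]
  exact Finset.sum_congr rfl fun i _ => by rw [hg N i i.isLt]

theorem hasBasis_nhds_zero :
    (𝓝 (0 : Rinf)).HasBasis (fun _ => True) fun w => (weightedSeminorm w).ball 0 1 :=
  ⟨fun _ => ⟨fun hU => (exists_weightedSeminorm_ball_subset hU).imp fun _ h => ⟨trivial, h⟩,
    fun ⟨w, _, hw⟩ => mem_of_superset
      ((weightedSeminorm w).ball_mem_nhds (continuous_weightedSeminorm w) one_pos) hw⟩⟩

lemma tendsto_nhds_zero_iff {α : Type*} {l : Filter α} {f : α → Rinf} :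
    Tendsto f l (𝓝 0) ↔ ∀ w, ∀ᶠ a in l, weightedSeminorm w (f a) < 1 := by
  simp [hasBasis_nhds_zero.tendsto_right_iff]

lemma eventually_weightedSeminorm_lt (w : ℕ → ℝ≥0) {r : ℝ} (hr : 0 < r) :
    ∀ᶠ x in 𝓝 (0 : Rinf), weightedSeminorm w x < r := by
  filter_upwards [(weightedSeminorm w).ball_mem_nhds (continuous_weightedSeminorm w) hr]
    with x hx using (Seminorm.mem_ball_zero _).1 hx

instance : IsTopologicalAddGroup Rinf :=
  .of_comm_of_nhds_zero
    (tendsto_nhds_zero_iff.2 fun w =>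
      ((eventually_weightedSeminorm_lt w one_half_pos).prod_mk
        (eventually_weightedSeminorm_lt w one_half_pos)).mono fun z hz =>
          (map_add_le_add _ _ _).trans_lt (by linarith [hz.1, hz.2]))
    (tendsto_nhds_zero_iff.2 fun w =>
      (eventually_weightedSeminorm_lt w one_pos).mono fun x hx => by rwa [map_neg_eq_map])
    fun v => (map_const_add_nhds_zero v).symm

instance : ContinuousSMul ℝ Rinf := by
  have hev : ∀ w (z₀ : ℝ × Rinf), z₀.1 = 0 ∨ z₀.2 = 0 →
      ∀ᶠ z in 𝓝 z₀, weightedSeminorm w (z.1 • z.2) < 1 := fun w z₀ hz₀ => by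
    have hc : Continuous fun z : ℝ × Rinf => ‖z.1‖ * weightedSeminorm w z.2 :=
      (continuous_norm.comp continuous_fst).mul ((continuous_weightedSeminorm w).comp continuous_snd)
    have h₀ : ‖z₀.1‖ * weightedSeminorm w z₀.2 < 1 := by rcases hz₀ with h | h <;> simp [h]
    filter_upwards [(hc.tendsto z₀).eventually (gt_mem_nhds h₀)] with z hz
    rwa [map_smul_eq_mul]
  refine .of_nhds_zero (tendsto_nhds_zero_iff.2 fun w => ?_)
    (fun x => tendsto_nhds_zero_iff.2 fun w => ?_) fun a => tendsto_nhds_zero_iff.2 fun w => ?_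
  · rw [← nhds_prod_eq]
    exact hev w (0, 0) (.inl rfl)
  · exact ((continuous_id.prodMk continuous_const).tendsto (0 : ℝ)).eventually
      (hev w (0, x) (.inl rfl))
  · exact ((continuous_const.prodMk continuous_id).tendsto (0 : Rinf)).eventually
      (hev w (a, 0) (.inr rfl))

theorem not_firstCountableTopology : ¬ FirstCountableTopology Rinf := by
  intro _
  obtain ⟨s, hs⟩ := (𝓝 (0 : Rinf)).exists_antitone_basis
  have : ∀ k, ∃ t : ℝ, 0 < t ∧ t • eRinf k ∈ s k := fun k => by
    have hc : Continuous fun t : ℝ => t • eRinf k := continuous_id.smul continuous_const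
    have : Tendsto (fun t : ℝ => t • eRinf k) (𝓝[>] 0) (𝓝 0) :=
      (hc.tendsto' 0 0 (zero_smul ℝ _)).mono_left nhdsWithin_le_nhds
    exact ((this.eventually (hs.mem k)).and self_mem_nhdsWithin).exists.imp fun t h => ⟨h.2, h.1⟩
  choose t ht hts using this
  -- the ball of weights `(t k)⁻¹` contains none of the points `t k • eRinf k`
  let w : ℕ → ℝ≥0 := fun k => ⟨(t k)⁻¹, (inv_pos.2 (ht k)).le⟩
  obtain ⟨k, -, hk⟩ := hs.toHasBasis.mem_iff.1 (hasBasis_nhds_zero.mem_of_mem (i := w) trivial)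
  have := (Seminorm.mem_ball_zero _).1 (hk (hts k))
  rw [map_smul_eq_mul, weightedSeminorm_eRinf, Real.norm_eq_abs, abs_of_pos (ht k)] at this
  exact (mul_inv_cancel₀ (ht k).ne').not_lt this

lemma linearIndependent_eRinf : LinearIndependent ℝ eRinf :=
  LinearIndependent.of_comp toSeq <| by
    simpa only [Function.comp_def, toSeq_eRinf] using Pi.linearIndependent_single_one ℕ ℝ

lemma span_eRinf : ⊤ ≤ Submodule.span ℝ (Set.range eRinf) := by
  rintro x -
  obtain ⟨N, hN⟩ := x.exists_toSeq_eq_zero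
  have hx : ∑ m ∈ Finset.range N, toSeq x m • eRinf m = x := by
    ext k
    simp only [map_sum, map_smul, toSeq_eRinf, Finset.sum_apply, Pi.smul_apply,
      Pi.single_apply, smul_eq_mul, mul_ite, mul_one, mul_zero, Finset.sum_ite_eq,
      Finset.mem_range]
    split_ifs with hk
    · rfl
    · exact (hN k (not_lt.1 hk)).symm
  rw [← hx]
  exact Submodule.sum_mem _ fun m _ => Submodule.smul_mem _ _ (Submodule.subset_span ⟨m, rfl⟩)

noncomputable def basis : Module.Basis ℕ ℝ Rinf := .mk linearIndependent_eRinf span_eRinf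

@[simp] lemma coe_basis : ⇑basis = eRinf := Module.Basis.coe_mk _ _

lemma rank_eq_aleph0 : Module.rank ℝ Rinf = ℵ₀ := by
  rw [← basis.mk_eq_rank'', Cardinal.mk_nat]

end Rinf

section Graph

variable {R M N : Type*} [Semiring R] [AddCommMonoid M] [Module R M] [AddCommMonoid N]
  [Module R N]

lemma LinearMap.span_range_prod_eq_graph {ι : Type*} {v : ι → M} (hv : Submodule.span R (Set.range v) = ⊤)
    (g : M →ₗ[R] N) : Submodule.span R (Set.range fun i => (v i, g (v i))) = g.graph := by
  rw [graph_eq_range_prod, range_eq_map, ← hv, Submodule.map_span, ← Set.range_comp]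
  rfl

lemma LinearMap.graph_inf_graph_eq_bot {g h : M →ₗ[R] N} (hg : Function.Injective g)
    (hgh : Disjoint (range g) (range h)) : g.graph ⊓ h.graph = ⊥ := by
  refine eq_bot_iff.2 fun z hz => ?_
  obtain ⟨hz₁, hz₂⟩ := Submodule.mem_inf.1 hz
  rw [mem_graph_iff] at hz₁ hz₂
  have h0 : g z.1 = 0 := Submodule.disjoint_def.1 hgh _ (mem_range_self g _)
    (hz₁ ▸ hz₂ ▸ mem_range_self h _)
  have h1 : z.1 = 0 := hg (h0.trans (map_zero g).symm)
  exact (Submodule.mem_bot R).2 (Prod.ext h1 (hz₁.trans h0))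

end Graph

section Column

variable {R M N ι κ : Type*} [CommSemiring R] [AddCommMonoid M] [Module R M] [AddCommMonoid N]
  [Module R N]

lemma Module.Basis.injective_constr_column (b : Basis ι R M) (f : Basis (ι × κ) R N) (k : κ) :
    Function.Injective (b.constr R fun i => f (i, k)) :=
  b.injective_constr_of_linearIndependent <|
    f.linearIndependent.comp _ fun _ _ h => (Prod.mk.inj h).1

lemma Module.Basis.disjoint_range_constr_column (b : Basis ι R M) (f : Basis (ι × κ) R N)
    {k l : κ} (hkl : k ≠ l) :
    Disjoint (LinearMap.range (b.constr R fun i => f (i, k)))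
      (LinearMap.range (b.constr R fun i => f (i, l))) := by
  rw [constr_range, constr_range]
  change Disjoint (Submodule.span R (Set.range (f ∘ fun i => (i, k))))
    (Submodule.span R (Set.range (f ∘ fun i => (i, l))))
  rw [Set.range_comp, Set.range_comp]
  refine f.linearIndependent.disjoint_span_image (Set.disjoint_left.2 ?_)
  rintro _ ⟨i, rfl⟩ ⟨j, h⟩
  exact hkl (Prod.mk.inj h).2.symm

end Column

lemma dense_of_dense_image_fst {X V : Type*} [TopologicalSpace X] [TopologicalSpace V]
    [IndiscreteTopology V] {S : Set (X × V)} (hS : Dense (Prod.fst '' S)) : Dense S := by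
  rintro ⟨a, b⟩
  rw [mem_closure_iff_nhds]
  intro t ht
  rw [nhds_prod_eq, IndiscreteTopology.nhds_eq b, prod_top, mem_comap] at ht
  obtain ⟨u, hu, hut⟩ := ht
  obtain ⟨_, hu', p, hp, rfl⟩ := mem_closure_iff_nhds.1 (hS a) u hu
  exact ⟨p, hut hu', hp⟩

lemma aleph0_lt_tsWeight_of_not_firstCountableTopology {X : Type*} [TopologicalSpace X]
    (h : ¬ FirstCountableTopology X) : ℵ₀ < tsWeight X := by
  by_contra! hle
  obtain ⟨B, hB, hBc⟩ := csInf_mem (s := {c | ∃ B : Set (Set X),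
    TopologicalSpace.IsTopologicalBasis B ∧ #B = c})
    ⟨_, _, TopologicalSpace.isTopologicalBasis_opens, rfl⟩
  have := hB.secondCountableTopology
    (Set.countable_coe_iff.1 (Cardinal.mk_le_aleph0_iff.1 (hBc.trans_le hle)))
  exact h inferInstance

/-- Let `V` be an `ℵ₀`-dimensional real vector space with the trivial
(indiscrete) topology and `X := ℝ^∞ × V` with the product topology.  Then `X` is a topological
vector space with `dim X = ℵ₀ < w(X)` (in particular `X` is not first-countable), and there is a
countably infinite family of dense linear subspaces of `X` with pairwise trivial intersections;
concretely, `X_n := span {(e_m, f_m^n) : m ∈ ℕ}` works, where `{e_m}` is the canonical basis of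
`ℝ^∞` and `{f_m^n}` is a basis of `V`. -/
theorem stmt4 (V : Type) [AddCommGroup V] [Module ℝ V] [tV : TopologicalSpace V]
    (htriv : tV = ⊤) (hV : Module.rank ℝ V = Cardinal.aleph0) (f : Module.Basis (ℕ × ℕ) ℝ V) :
    ContinuousAdd (Rinf × V) ∧ ContinuousSMul ℝ (Rinf × V) ∧
    Module.rank ℝ (Rinf × V) = Cardinal.aleph0 ∧
    Cardinal.aleph0 < tsWeight (Rinf × V) ∧
    ¬ FirstCountableTopology (Rinf × V) ∧
    (∀ n : ℕ,
      Dense ((Submodule.span ℝ {p : Rinf × V | ∃ m : ℕ, p = (eRinf m, f (m, n))} :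
        Submodule ℝ (Rinf × V)) : Set (Rinf × V))) ∧
    (∀ i j : ℕ, i ≠ j →
      Submodule.span ℝ {p : Rinf × V | ∃ m : ℕ, p = (eRinf m, f (m, i))} ⊓
        Submodule.span ℝ {p : Rinf × V | ∃ m : ℕ, p = (eRinf m, f (m, j))} = ⊥) ∧
    ∃ Y : ℕ → Submodule ℝ (Rinf × V),
      (∀ n, Dense (Y n : Set (Rinf × V))) ∧ ∀ i j, i ≠ j → Y i ⊓ Y j = ⊥ := by
  have : IndiscreteTopology V := ⟨htriv⟩
  have : ContinuousAdd V := ⟨continuous_of_indiscreteTopology⟩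
  have : ContinuousSMul ℝ V := ⟨continuous_of_indiscreteTopology⟩
  let Φ : ℕ → Rinf →ₗ[ℝ] V := fun n => Rinf.basis.constr ℝ fun m => f (m, n)
  have hX : ∀ n, Submodule.span ℝ {p : Rinf × V | ∃ m : ℕ, p = (eRinf m, f (m, n))} =
      (Φ n).graph := fun n => by
    rw [← LinearMap.span_range_prod_eq_graph Rinf.basis.span_eq]
    congr 1
    ext p
    exact exists_congr fun m => by
      simp only [Φ, Module.Basis.constr_basis]
      rw [Rinf.coe_basis, eq_comm]
  have hnfc : ¬ FirstCountableTopology (Rinf × V) := fun _ =>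
    Rinf.not_firstCountableTopology (isEmbedding_prodMkLeft (0 : V)).firstCountableTopology
  have hdense : ∀ n, Dense ((Φ n).graph : Set (Rinf × V)) := fun n => by
    have hfst : Prod.fst '' ((Φ n).graph : Set (Rinf × V)) = Set.univ :=
      Set.eq_univ_of_forall fun x => ⟨(x, Φ n x), (LinearMap.mem_graph_iff _ _).2 rfl, rfl⟩
    exact dense_of_dense_image_fst (hfst ▸ dense_univ)
  have hdisj : ∀ i j, i ≠ j → (Φ i).graph ⊓ (Φ j).graph = ⊥ := fun i j hij =>
    LinearMap.graph_inf_graph_eq_bot (Rinf.basis.injective_constr_column f i)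
      (Rinf.basis.disjoint_range_constr_column f hij)
  simp only [hX]
  exact ⟨inferInstance, inferInstance,
    by rw [rank_prod', Rinf.rank_eq_aleph0, hV, Cardinal.aleph0_add_aleph0],
    aleph0_lt_tsWeight_of_not_firstCountableTopology hnfc, hnfc, hdense, hdisj, _, hdense, hdisj⟩
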